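/- arXiv:1903.08587 — 6 statements merged into one kernel-verified Lean document; each statement's English description precedes it below -/
import Mathlib

section
/- Fix an integer q ≥ 1 and a real p ∈ [0,1]. Consider the uncertain directed graph whose vertex set consists of the pairwise distinct vertices s, t, u_1, …, u_q, whose edge set is {(s,u_i) : 1 ≤ i ≤ q} ∪ {(u_i,t) : 1 ≤ i ≤ q}, where every edge (s,u_i) has probability 1 and every edge (u_i,t) has probability p. Then the s-t reliability of this graph equals 1 − (1−p)^q. Moreover, if 0 < p < 1, then the map q ↦ 1 − (1−p)^q is strictly increasing in q, so reaching more of the nodes u_i strictly increases the s-t reliability. -/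
open scoped Classical

/-- The s-t reliability of the uncertain directed graph `(V, E, p)`:
the sum, over all possible worlds `S ⊆ E`, of the probability
`(∏ e ∈ S, p e) * (∏ e ∈ E \ S, (1 - p e))` of the world, counted when
`t` is reachable from `s` using the edges of `S`. -/
noncomputable def reliability {V : Type} (E : Finset (V × V)) (p : V × V → ℝ)
    (s t : V) : ℝ :=
  ∑ S ∈ E.powerset,
    if Relation.ReflTransGen (fun a b => (a, b) ∈ S) s t then
      (∏ e ∈ S, p e) * ∏ e ∈ E \ S, (1 - p e)
    else 0

/-- For the graph with vertices `s, t, u 1, …, u q` (pairwise distinct), edges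
`(s, u i)` with probability `1` and `(u i, t)` with probability `p ∈ [0,1]`,
the s-t reliability equals `1 - (1-p)^q`; moreover if `0 < p < 1` then
`q ↦ 1 - (1-p)^q` is strictly increasing. -/
theorem stmt0 {V : Type} [Fintype V] (q : ℕ) (hq : 1 ≤ q)
    (p : ℝ) (hp0 : 0 ≤ p) (hp1 : p ≤ 1)
    (s t : V) (u : Fin q → V)
    (hV : ∀ x : V, x = s ∨ x = t ∨ ∃ i, x = u i)
    (hst : s ≠ t) (hsu : ∀ i, s ≠ u i) (htu : ∀ i, t ≠ u i)
    (hu : Function.Injective u)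
    (pr : V × V → ℝ)
    (hpr1 : ∀ i, pr (s, u i) = 1) (hpr2 : ∀ i, pr (u i, t) = p) :
    reliability
        ((Finset.univ.image fun i => (s, u i)) ∪ (Finset.univ.image fun i => (u i, t)))
        pr s t = 1 - (1 - p) ^ q ∧
    (0 < p → p < 1 → StrictMono fun n : ℕ => 1 - (1 - p) ^ n) := by
  constructor
  · set A : Finset (V × V) := Finset.univ.image fun i => (s, u i) with hA
    set B : Finset (V × V) := Finset.univ.image fun i => (u i, t) with hB
    have memA : ∀ e, e ∈ A ↔ ∃ i, e = (s, u i) := by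
      intro e; simp [hA, eq_comm]
    have memB : ∀ e, e ∈ B ↔ ∃ i, e = (u i, t) := by
      intro e; simp [hB, eq_comm]
    have hdisj : Disjoint A B := by
      rw [Finset.disjoint_left]
      intro e heA heB
      obtain ⟨i, rfl⟩ := (memA e).1 heA
      obtain ⟨j, hj⟩ := (memB _).1 heB
      exact hsu j (congrArg Prod.fst hj)
    have cardB : B.card = q := by
      rw [hB, Finset.card_image_of_injective _ (fun i j h => hu (congrArg Prod.fst h))]
      simp
    -- reachability characterization
    have reach_iff : ∀ S : Finset (V × V), S ⊆ A ∪ B →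
        (Relation.ReflTransGen (fun a b => (a, b) ∈ S) s t ↔
          ∃ i, (s, u i) ∈ S ∧ (u i, t) ∈ S) := by
      intro S hS
      constructor
      · intro h
        have key : ∀ x, Relation.ReflTransGen (fun a b => (a, b) ∈ S) s x →
            x = s ∨ (∃ i, (s, u i) ∈ S ∧ x = u i) ∨
              (∃ i, (s, u i) ∈ S ∧ (u i, t) ∈ S ∧ x = t) := by
          intro x hx
          induction hx with
          | refl => exact Or.inl rfl
          | @tail b c hb hbc ih =>
            have hbcE : (b, c) ∈ A ∪ B := hS hbc
            rcases ih with rfl | ⟨i, hi, rfl⟩ | ⟨i, h1, h2, rfl⟩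
            · rcases Finset.mem_union.1 hbcE with hA' | hB'
              · obtain ⟨i, hi⟩ := (memA _).1 hA'
                have hc : c = u i := congrArg Prod.snd hi
                subst hc
                exact Or.inr (Or.inl ⟨i, hbc, rfl⟩)
              · obtain ⟨j, hj⟩ := (memB _).1 hB'
                exact absurd (congrArg Prod.fst hj) (hsu j)
            · rcases Finset.mem_union.1 hbcE with hA' | hB'
              · obtain ⟨j, hj⟩ := (memA _).1 hA'
                exact absurd (congrArg Prod.fst hj) (Ne.symm (hsu i))
              · obtain ⟨j, hj⟩ := (memB _).1 hB'
                have hct : c = t := congrArg Prod.snd hj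
                subst hct
                exact Or.inr (Or.inr ⟨i, hi, hbc, rfl⟩)
            · rcases Finset.mem_union.1 hbcE with hA' | hB'
              · obtain ⟨j, hj⟩ := (memA _).1 hA'
                exact absurd (congrArg Prod.fst hj).symm hst
              · obtain ⟨j, hj⟩ := (memB _).1 hB'
                exact absurd (congrArg Prod.fst hj) (htu j)
        rcases key t h with rfl | ⟨i, _, hi⟩ | ⟨i, h1, h2, _⟩
        · exact absurd rfl hst
        · exact absurd hi (htu i)
        · exact ⟨i, h1, h2⟩
      · rintro ⟨i, h1, h2⟩
        exact Relation.ReflTransGen.head h1 (Relation.ReflTransGen.single h2)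
    have hA1 : ∀ e ∈ A, pr e = 1 := by
      intro e he; obtain ⟨i, rfl⟩ := (memA e).1 he; exact hpr1 i
    have hBp : ∀ e ∈ B, pr e = p := by
      intro e he; obtain ⟨i, rfl⟩ := (memB e).1 he; exact hpr2 i
    rw [reliability]
    -- drop worlds not containing all of A
    have step1 : ∑ S ∈ (A ∪ B).powerset,
        (if Relation.ReflTransGen (fun a b => (a, b) ∈ S) s t then
          (∏ e ∈ S, pr e) * ∏ e ∈ (A ∪ B) \ S, (1 - pr e) else 0)
        = ∑ S ∈ (A ∪ B).powerset.filter (fun S => A ⊆ S),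
        (if Relation.ReflTransGen (fun a b => (a, b) ∈ S) s t then
          (∏ e ∈ S, pr e) * ∏ e ∈ (A ∪ B) \ S, (1 - pr e) else 0) := by
      symm
      apply Finset.sum_subset (Finset.filter_subset _ _)
      intro S hS hS'
      have hnotsub : ¬ A ⊆ S := by
        intro h; exact hS' (Finset.mem_filter.2 ⟨hS, h⟩)
      obtain ⟨a, haA, haS⟩ := Finset.not_subset.1 hnotsub
      have : ∏ e ∈ (A ∪ B) \ S, (1 - pr e) = 0 := by
        apply Finset.prod_eq_zero (Finset.mem_sdiff.2
          ⟨Finset.mem_union_left _ haA, haS⟩)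
        rw [hA1 a haA]; ring
      rw [this]
      simp
    rw [step1]
    -- bijection with subsets of B
    have step2 : ∑ S ∈ (A ∪ B).powerset.filter (fun S => A ⊆ S),
        (if Relation.ReflTransGen (fun a b => (a, b) ∈ S) s t then
          (∏ e ∈ S, pr e) * ∏ e ∈ (A ∪ B) \ S, (1 - pr e) else 0)
        = ∑ T ∈ B.powerset,
          (if T.Nonempty then p ^ T.card * (1 - p) ^ (B \ T).card else 0) := by
      apply Finset.sum_bij' (fun S _ => S ∩ B) (fun T _ => A ∪ T)
      · intro S hS
        exact Finset.mem_powerset.2 (Finset.inter_subset_right)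
      · intro T hT
        have hTB := Finset.mem_powerset.1 hT
        refine Finset.mem_filter.2 ⟨Finset.mem_powerset.2 ?_, Finset.subset_union_left⟩
        exact Finset.union_subset_union (le_refl A) hTB
      · intro S hS
        obtain ⟨hS1, hS2⟩ := Finset.mem_filter.1 hS
        have hSE := Finset.mem_powerset.1 hS1
        ext x
        simp only [Finset.mem_union, Finset.mem_inter]
        constructor
        · rintro (hx | ⟨hx, _⟩)
          · exact hS2 hx
          · exact hx
        · intro hx
          rcases Finset.mem_union.1 (hSE hx) with h | h
          · exact Or.inl h
          · exact Or.inr ⟨hx, h⟩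
      · intro T hT
        have hTB := Finset.mem_powerset.1 hT
        rw [Finset.union_inter_distrib_right]
        rw [Finset.inter_eq_left.2 hTB, (Finset.disjoint_iff_inter_eq_empty.1 hdisj)]
        simp
      · intro S hS
        obtain ⟨hS1, hS2⟩ := Finset.mem_filter.1 hS
        have hSE := Finset.mem_powerset.1 hS1
        have hSeq : S = A ∪ (S ∩ B) := by
          ext x
          simp only [Finset.mem_union, Finset.mem_inter]
          constructor
          · intro hx
            rcases Finset.mem_union.1 (hSE hx) with h | h
            · exact Or.inl h
            · exact Or.inr ⟨hx, h⟩
          · rintro (hx | ⟨hx, _⟩)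
            · exact hS2 hx
            · exact hx
        have hcond : Relation.ReflTransGen (fun a b => (a, b) ∈ S) s t ↔
            (S ∩ B).Nonempty := by
          rw [reach_iff S hSE]
          constructor
          · rintro ⟨i, _, h2⟩
            exact ⟨(u i, t), Finset.mem_inter.2 ⟨h2, (memB _).2 ⟨i, rfl⟩⟩⟩
          · rintro ⟨e, he⟩
            obtain ⟨heS, heB⟩ := Finset.mem_inter.1 he
            obtain ⟨i, rfl⟩ := (memB e).1 heB
            exact ⟨i, hS2 ((memA _).2 ⟨i, rfl⟩), heS⟩
        rw [if_congr hcond rfl rfl]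
        by_cases hne : (S ∩ B).Nonempty
        · rw [if_pos hne, if_pos hne]
          have hdisjAT : Disjoint A (S ∩ B) :=
            hdisj.mono_right Finset.inter_subset_right
          have hprod1 : ∏ e ∈ S, pr e = p ^ (S ∩ B).card := by
            conv_lhs => rw [hSeq]
            rw [Finset.prod_union hdisjAT, Finset.prod_eq_one hA1,
              Finset.prod_congr rfl (fun e he => hBp e (Finset.inter_subset_right he)),
              Finset.prod_const, one_mul]
          have hsdiff : (A ∪ B) \ S = B \ (S ∩ B) := by
            ext x
            simp only [Finset.mem_sdiff, Finset.mem_union, Finset.mem_inter]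
            constructor
            · rintro ⟨h | h, hn⟩
              · exact absurd (hS2 h) hn
              · exact ⟨h, fun hc => hn hc.1⟩
            · rintro ⟨h, hn⟩
              exact ⟨Or.inr h, fun hc => hn ⟨hc, h⟩⟩
          have hprod2 : ∏ e ∈ (A ∪ B) \ S, (1 - pr e) = (1 - p) ^ (B \ (S ∩ B)).card := by
            rw [hsdiff,
              Finset.prod_congr rfl
                (fun e he => by rw [hBp e (Finset.mem_sdiff.1 he).1]),
              Finset.prod_const]
          rw [hprod1, hprod2]
        · rw [if_neg hne, if_neg hne]
    rw [step2]
    have hterm : ∀ T ∈ B.powerset,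
        (if T.Nonempty then p ^ T.card * (1 - p) ^ (B \ T).card else 0)
        = p ^ T.card * (1 - p) ^ (B \ T).card
          - (if T = ∅ then p ^ T.card * (1 - p) ^ (B \ T).card else 0) := by
      intro T _
      rcases T.eq_empty_or_nonempty with rfl | h
      · simp
      · rw [if_pos h, if_neg h.ne_empty]; ring
    rw [Finset.sum_congr rfl hterm, Finset.sum_sub_distrib]
    have hsum1 : ∑ T ∈ B.powerset, p ^ T.card * (1 - p) ^ (B \ T).card = 1 := by
      have h := Finset.prod_add (fun _ : V × V => p) (fun _ => (1 - p)) B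
      simp only [Finset.prod_const] at h
      rw [← h]
      have : p + (1 - p) = 1 := by ring
      rw [this]
      simp
    have hsum2 : ∑ T ∈ B.powerset,
        (if T = ∅ then p ^ T.card * (1 - p) ^ (B \ T).card else 0)
        = (1 - p) ^ q := by
      rw [Finset.sum_ite_eq' B.powerset (∅ : Finset (V × V))
        (fun T => p ^ T.card * (1 - p) ^ (B \ T).card)]
      simp [cardB]
    rw [hsum1, hsum2]
  · intro hp hp1' a b hab
    simp only
    have h1 : (1 - p) ^ b < (1 - p) ^ a :=
      pow_lt_pow_right_of_lt_one₀ (by linarith) (by linarith) hab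
    linarith
end

section
/- The s-t reliability, viewed as a set function of the edge set, is not submodular: there exist a finite vertex set V, vertices s, t ∈ V, a function p : V×V → ℝ taking values in [0,1], edge sets X ⊆ Y ⊆ V×V, and an edge x ∈ (V×V)∖Y such that R(s,t,(V, X∪{x}, p)) − R(s,t,(V, X, p)) < R(s,t,(V, Y∪{x}, p)) − R(s,t,(V, Y, p)). -/
open scoped Classical

/-- Reachability from `0` to `2` in the three-vertex graph, characterized. -/
lemma reach_iff (S : Finset (Fin 3 × Fin 3))
    (hS : S ⊆ {((1:Fin 3),(2:Fin 3)), (0,2), (0,1)}) :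
    Relation.ReflTransGen (fun a b => (a, b) ∈ S) (0:Fin 3) 2 ↔
      ((0,2) ∈ S ∨ ((0,1) ∈ S ∧ (1,2) ∈ S)) := by
  constructor
  · intro h
    have key : ∀ v, Relation.ReflTransGen (fun a b => (a, b) ∈ S) (0:Fin 3) v →
        (v = 0 ∨ (v = 1 ∧ (0,1) ∈ S) ∨
          (v = 2 ∧ ((0,2) ∈ S ∨ ((0,1) ∈ S ∧ (1,2) ∈ S)))) := by
      intro v hv
      induction hv with
      | refl => exact Or.inl rfl
      | @tail b c hb hbc ih =>
        have hmem := hS hbc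
        simp only [Finset.mem_insert, Finset.mem_singleton, Prod.mk.injEq] at hmem
        rcases ih with rfl | ⟨rfl, h01⟩ | ⟨rfl, h2⟩
        · rcases hmem with ⟨h,rfl⟩ | ⟨h,rfl⟩ | ⟨h,rfl⟩
          · exact absurd h (by decide)
          · exact Or.inr (Or.inr ⟨rfl, Or.inl hbc⟩)
          · exact Or.inr (Or.inl ⟨rfl, hbc⟩)
        · rcases hmem with ⟨h,rfl⟩ | ⟨h,rfl⟩ | ⟨h,rfl⟩
          · exact Or.inr (Or.inr ⟨rfl, Or.inr ⟨h01, hbc⟩⟩)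
          · exact absurd h (by decide)
          · exact absurd h (by decide)
        · rcases hmem with ⟨h,rfl⟩ | ⟨h,rfl⟩ | ⟨h,rfl⟩ <;> exact absurd h (by decide)
    rcases key 2 h with h | ⟨h,_⟩ | ⟨_, h⟩
    · exact absurd h (by decide)
    · exact absurd h (by decide)
    · exact h
  · rintro (h | ⟨h1, h2⟩)
    · exact Relation.ReflTransGen.single h
    · exact Relation.ReflTransGen.tail (Relation.ReflTransGen.single h1) h2

lemma sdiff_inst (i : DecidableEq (Fin 3 × Fin 3)) (A B : Finset (Fin 3 × Fin 3)) :
    @SDiff.sdiff _ (@Finset.instSDiff _ i) A B =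
      @SDiff.sdiff _ (@Finset.instSDiff _ instDecidableEqProd) A B := by congr!

lemma insert_inst (i : DecidableEq (Fin 3 × Fin 3)) (a : Fin 3 × Fin 3)
    (A : Finset (Fin 3 × Fin 3)) :
    @insert _ _ (@Finset.instInsert _ i) a A =
      @insert _ _ (@Finset.instInsert _ instDecidableEqProd) a A := by congr!

lemma weight (S T : Finset (Fin 3 × Fin 3)) :
    (∏ _e ∈ S, ((1:ℝ)/2)) * ∏ _e ∈ T, (1 - (1:ℝ)/2) =
      (1/2) ^ (S.card + T.card) := by
  have : (1:ℝ) - 1/2 = 1/2 := by norm_num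
  rw [this, Finset.prod_const, Finset.prod_const, ← pow_add]

lemma rel_eval (E : Finset (Fin 3 × Fin 3))
    (hE : E ⊆ {((1:Fin 3),(2:Fin 3)), (0,2), (0,1)}) :
    reliability E (fun _ => 1/2) 0 2 =
      ∑ S ∈ E.powerset,
        (if ((0,2) ∈ S ∨ ((0,1) ∈ S ∧ (1,2) ∈ S)) then ((1:ℝ)/2) ^ E.card else 0) := by
  unfold reliability
  refine Finset.sum_congr rfl (fun S hS => ?_)
  have h := Finset.mem_powerset.mp hS
  rw [reach_iff S (h.trans hE)]; split_ifs with hc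
  · beta_reduce; rw [sdiff_inst, weight, Finset.card_sdiff_of_subset h,
      Nat.add_sub_cancel' (Finset.card_le_card h)]
  · rfl

/-- The s-t reliability, viewed as a set function of the edge set, is not
submodular: there exist a finite vertex set `V`, vertices `s t : V`, edge
probabilities `p` with values in `[0,1]`, edge sets `X ⊆ Y` and an edge
`x ∉ Y` such that the marginal gain of `x` on top of `X` is strictly smaller
than the marginal gain of `x` on top of `Y`. -/
theorem stmt2 :
    ∃ (V : Type) (_ : Fintype V) (s t : V) (p : V × V → ℝ)
      (X Y : Finset (V × V)) (x : V × V),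
      (∀ e, 0 ≤ p e ∧ p e ≤ 1) ∧ X ⊆ Y ∧ x ∉ Y ∧
      reliability (insert x X) p s t - reliability X p s t <
        reliability (insert x Y) p s t - reliability Y p s t := by
  refine ⟨Fin 3, inferInstance, 0, 2, fun _ => 1/2,
    {(0,2)}, {(0,2),(0,1)}, (1,2), fun e => by norm_num, by decide, by decide, ?_⟩
  have h1 : reliability ({(0,2)} : Finset (Fin 3 × Fin 3)) (fun _ => 1/2) 0 2 = 1/2 := by
    rw [rel_eval _ (by decide),
      show ({(0,2)} : Finset (Fin 3 × Fin 3)).powerset = {∅, {(0,2)}} from by decide]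
    simp (config := { decide := true }) [Finset.sum_insert]
  have h2 : reliability (insert (1,2) ({(0,2)} : Finset (Fin 3 × Fin 3)))
      (fun _ => 1/2) 0 2 = 1/2 := by
    rw [rel_eval _ (by decide),
      show ((insert ((1:Fin 3),(2:Fin 3)) {(0,2)}) : Finset (Fin 3 × Fin 3)).powerset =
        ({∅, {(1,2)}, {(0,2)}, {(1,2),(0,2)}} : Finset (Finset (Fin 3 × Fin 3))) from by decide]
    simp (config := { decide := true }) [Finset.sum_insert]
    norm_num
  have h3 : reliability ({(0,2),(0,1)} : Finset (Fin 3 × Fin 3)) (fun _ => 1/2) 0 2 = 1/2 := by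
    rw [rel_eval _ (by decide),
      show ({(0,2),(0,1)} : Finset (Fin 3 × Fin 3)).powerset =
        {∅, {(0,2)}, {(0,1)}, {(0,2),(0,1)}} from by decide]
    simp (config := { decide := true }) [Finset.sum_insert]
    norm_num
  have h4 : reliability (insert (1,2) ({(0,2),(0,1)} : Finset (Fin 3 × Fin 3)))
      (fun _ => 1/2) 0 2 = 5/8 := by
    rw [rel_eval _ (by decide),
      show ((insert ((1:Fin 3),(2:Fin 3)) {(0,2),(0,1)}) : Finset (Fin 3 × Fin 3)).powerset =
        ({∅, {(1,2)}, {(0,2)}, {(0,1)}, {(1,2),(0,2)}, {(1,2),(0,1)}, {(0,2),(0,1)},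
          {(1,2),(0,2),(0,1)}} : Finset (Finset (Fin 3 × Fin 3))) from by decide]
    simp (config := { decide := true }) [Finset.sum_insert]
    norm_num
  simp only [insert_inst]
  rw [h1, h2, h3, h4]
  norm_num
end

section
/- The s-t reliability, viewed as a set function of the edge set, is not supermodular: there exist a finite vertex set V, vertices s, t ∈ V, a function p : V×V → ℝ taking values in [0,1], edge sets X ⊆ Y ⊆ V×V, and an edge x ∈ (V×V)∖Y such that R(s,t,(V, X∪{x}, p)) − R(s,t,(V, X, p)) > R(s,t,(V, Y∪{x}, p)) − R(s,t,(V, Y, p)). -/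
/-!
With every edge present with probability `1/2`, the reliability of `E` is the number of worlds
`S ⊆ E` in which `t` is reachable from `s`, divided by `2 ^ #E`. In the triangle with edges
`(s,A)`, `(s,t)`, `(A,t)`, the target is reachable exactly when `(s,t)` is present or both
`(s,A)` and `(A,t)` are, so the four reliabilities are `0, 1/4, 1/2, 5/8`: adding `(A,t)` gains
`1/4` over `X` but only `1/8` over `Y`, because the direct edge `(s,t)` already serves the worlds
in which the new path would have helped.
-/

open scoped Classical

open Finset Relation

theorem reliability_const_half {V : Type} (E : Finset (V × V)) (s t : V) :
    reliability E (fun _ => 1 / 2) s t =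
      #{S ∈ E.powerset | ReflTransGen (fun a b => (a, b) ∈ S) s t} / 2 ^ #E := by
  have world : ∀ S ∈ E.powerset,
      (∏ _e ∈ S, (1 / 2 : ℝ)) * ∏ _e ∈ E \ S, (1 - 1 / 2 : ℝ) = (1 / 2) ^ #E := by
    intro S hS
    rw [show (1 : ℝ) - 1 / 2 = 1 / 2 by norm_num, prod_const, prod_const, ← pow_add, add_comm,
      card_sdiff_add_card_eq_card (mem_powerset.1 hS)]
  rw [reliability, ← sum_filter, sum_congr rfl fun S hS => world S (filter_subset _ _ hS),
    sum_const, nsmul_eq_mul, one_div_pow, mul_one_div]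

theorem reflTransGen_iff_of_subset_triangle {V : Type} [DecidableEq V] {s a t : V}
    (hsa : s ≠ a) (hst : s ≠ t) (hat : a ≠ t) {S : Finset (V × V)} (hS : S ⊆ {(s, a), (s, t), (a, t)}) :
    ReflTransGen (fun u v => (u, v) ∈ S) s t ↔ (s, t) ∈ S ∨ (s, a) ∈ S ∧ (a, t) ∈ S := by
  have into {u v : V} (h : (u, v) ∈ S) : u = s ∧ v = a ∨ u = s ∧ v = t ∨ u = a ∧ v = t := by
    simpa using hS h
  have reach_a : ReflTransGen (fun u v => (u, v) ∈ S) s a ↔ (s, a) ∈ S := by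
    rw [ReflTransGen.cases_tail_iff]
    constructor
    · rintro (h | ⟨c, -, hc⟩)
      · exact absurd h.symm hsa
      · rcases into hc with ⟨rfl, -⟩ | ⟨-, h⟩ | ⟨-, h⟩
        · exact hc
        · exact absurd h hat
        · exact absurd h hat
    · exact fun h => Or.inr ⟨s, .refl, h⟩
  rw [ReflTransGen.cases_tail_iff]
  constructor
  · rintro (h | ⟨c, hc, hct⟩)
    · exact absurd h.symm hst
    · rcases into hct with ⟨-, h⟩ | ⟨rfl, -⟩ | ⟨rfl, -⟩
      · exact absurd h.symm hat
      · exact Or.inl hct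
      · exact Or.inr ⟨reach_a.1 hc, hct⟩
  · rintro (h | ⟨hsa', hat'⟩)
    · exact Or.inr ⟨s, .refl, h⟩
    · exact Or.inr ⟨a, reach_a.2 hsa', hat'⟩

theorem reliability_triangle_half {E : Finset (Fin 3 × Fin 3)} (hE : E ⊆ {(0, 1), (0, 2), (1, 2)})
    {n : ℕ} (hn : #{S ∈ E.powerset | (0, 2) ∈ S ∨ (0, 1) ∈ S ∧ (1, 2) ∈ S} = n) :
    reliability E (fun _ => 1 / 2) 0 2 = n / 2 ^ #E := by
  rw [← hn, reliability_const_half, filter_congr fun S hS =>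
    reflTransGen_iff_of_subset_triangle (by decide) (by decide) (by decide)
      ((mem_powerset.1 hS).trans hE)]

theorem reliability_triangle_half_not_supermodular :
    reliability (insert (1, 2) {(0, 1)}) (fun _ => 1 / 2) (0 : Fin 3) 2 -
        reliability {(0, 1)} (fun _ => 1 / 2) (0 : Fin 3) 2 >
      reliability (insert (1, 2) {(0, 1), (0, 2)}) (fun _ => 1 / 2) (0 : Fin 3) 2 -
        reliability {(0, 1), (0, 2)} (fun _ => 1 / 2) (0 : Fin 3) 2 := by
  rw [reliability_triangle_half (by decide) (n := 1) (by decide),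
    reliability_triangle_half (by decide) (n := 0) (by decide),
    reliability_triangle_half (by decide) (n := 5) (by decide),
    reliability_triangle_half (by decide) (n := 2) (by decide)]
  norm_num +decide

/-- The s-t reliability, viewed as a set function of the edge set, is not
supermodular: there exist a finite vertex set `V`, vertices `s t : V`, edge
probabilities `p` with values in `[0,1]`, edge sets `X ⊆ Y` and an edge
`x ∉ Y` such that the marginal gain of `x` on top of `X` is strictly larger
than the marginal gain of `x` on top of `Y`. -/
theorem stmt3 :
    ∃ (V : Type) (_ : Fintype V) (s t : V) (p : V × V → ℝ)
      (X Y : Finset (V × V)) (x : V × V),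
      (∀ e, 0 ≤ p e ∧ p e ≤ 1) ∧ X ⊆ Y ∧ x ∉ Y ∧
      reliability (insert x X) p s t - reliability X p s t >
        reliability (insert x Y) p s t - reliability Y p s t := by
  refine ⟨Fin 3, inferInstance, 0, 2, fun _ => 1 / 2, {(0, 1)}, {(0, 1), (0, 2)}, (1, 2),
    fun _ => by norm_num, by decide, by decide, ?_⟩
  -- the statement's `insert` uses the classical `DecidableEq (V × V)`; `convert` identifies it
  -- with the computable instance on `Fin 3 × Fin 3`
  convert reliability_triangle_half_not_supermodular
end

section
/- The optimal solution of the budgeted reliability maximization problem may vary with the probability threshold ζ assigned to new edges: there exist a finite uncertain graph (V,E,p), vertices s, t ∈ V, a candidate edge set C disjoint from E, a budget k, two thresholds ζ₁ ≠ ζ₂ in (0,1], and a size-k set A ⊆ C such that A maximizes the s-t reliability of (V, E∪A') over all size-k subsets A' ⊆ C when added edges receive probability ζ₁, but A does not maximize it when added edges receive probability ζ₂. In particular, in the example graph with α = 1/2, for k = 2 and candidate set {sA, sB, Bt}, the unique optimal pair is {sB, Bt} when ζ = 7/10 but {sA, sB} when ζ = 3/10. -/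
open scoped Classical

/-- The s-t reliability of the undirected uncertain graph `(V, E, p)`: the sum,
over all possible worlds `S ⊆ E`, of the probability
`(∏ e ∈ S, p e) * (∏ e ∈ E \ S, (1 - p e))` of the world, counted when `t` is
reachable from `s` via the symmetric relation induced by the edges of `S`. -/
noncomputable def ureliability {V : Type} (E : Finset (V × V)) (p : V × V → ℝ)
    (s t : V) : ℝ :=
  ∑ S ∈ E.powerset,
    if Relation.ReflTransGen (fun a b => (a, b) ∈ S ∨ (b, a) ∈ S) s t then
      (∏ e ∈ S, p e) * ∏ e ∈ E \ S, (1 - p e)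
    else 0

lemma noReach {V : Type} {S : Finset (V × V)} {s t : V} (P : V → Prop) (hs : P s) (ht : ¬ P t)
    (h : ∀ a b, ((a, b) ∈ S ∨ (b, a) ∈ S) → (P a ↔ P b)) :
    ¬ Relation.ReflTransGen (fun a b => (a, b) ∈ S ∨ (b, a) ∈ S) s t := by
  have key : ∀ x, Relation.ReflTransGen (fun a b => (a, b) ∈ S ∨ (b, a) ∈ S) s x → P x := by
    intro x hx
    induction hx with
    | refl => exact hs
    | tail _ h2 ih => exact (h _ _ h2).mp ih
  exact fun hr => ht (key t hr)

lemma prod_split {α : Type*} [DecidableEq α] (E S : Finset α) (hS : S ⊆ E) (p : α → ℝ) :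
    (∏ e ∈ S, p e) * ∏ e ∈ E \ S, (1 - p e) = ∏ e ∈ E, (if e ∈ S then p e else 1 - p e) := by
  rw [Finset.prod_ite, Finset.filter_mem_eq_inter, Finset.inter_eq_right.mpr hS,
    ← Finset.sdiff_eq_filter]

section Graphs
variable {V : Type} {s A B t : V}

lemma reachG1 (h1 : s ≠ A) (h2 : s ≠ B) (h3 : s ≠ t) (h4 : A ≠ B) (h5 : A ≠ t) (h6 : B ≠ t)
    (S : Finset (V × V)) (hS : S ⊆ ({(A, B), (A, t), (s, A), (s, B)} : Finset (V × V))) :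
    Relation.ReflTransGen (fun a b => (a, b) ∈ S ∨ (b, a) ∈ S) s t ↔
      ((A, t) ∈ S ∧ ((s, A) ∈ S ∨ ((s, B) ∈ S ∧ (A, B) ∈ S))) := by
  have h1' : A ≠ s := h1.symm
  have h2' : B ≠ s := h2.symm
  have h3' : t ≠ s := h3.symm
  have h4' : B ≠ A := h4.symm
  have h5' : t ≠ A := h5.symm
  have h6' : t ≠ B := h6.symm
  constructor
  · intro hr
    by_cases hAt : (A, t) ∈ S
    · refine ⟨hAt, ?_⟩
      by_cases hsA : (s, A) ∈ S
      · exact Or.inl hsA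
      · by_cases hsB : (s, B) ∈ S
        · by_cases hAB : (A, B) ∈ S
          · exact Or.inr ⟨hsB, hAB⟩
          · refine absurd hr (noReach (fun v => v = s ∨ v = B) (Or.inl rfl) (by simp [h3', h6']) ?_)
            rintro a b (h | h) <;> have h' := hS h <;>
              simp only [Finset.mem_insert, Finset.mem_singleton, Prod.mk.injEq] at h' <;>
              rcases h' with ⟨rfl, rfl⟩ | ⟨rfl, rfl⟩ | ⟨rfl, rfl⟩ | ⟨rfl, rfl⟩ <;> simp_all
        · refine absurd hr (noReach (fun v => v = s) rfl h3' ?_)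
          rintro a b (h | h) <;> have h' := hS h <;>
            simp only [Finset.mem_insert, Finset.mem_singleton, Prod.mk.injEq] at h' <;>
            rcases h' with ⟨rfl, rfl⟩ | ⟨rfl, rfl⟩ | ⟨rfl, rfl⟩ | ⟨rfl, rfl⟩ <;> simp_all
    · refine absurd hr (noReach (fun v => v ≠ t) h3 (by simp) ?_)
      rintro a b (h | h) <;> have h' := hS h <;>
        simp only [Finset.mem_insert, Finset.mem_singleton, Prod.mk.injEq] at h' <;>
        rcases h' with ⟨rfl, rfl⟩ | ⟨rfl, rfl⟩ | ⟨rfl, rfl⟩ | ⟨rfl, rfl⟩ <;> simp_all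
  · rintro ⟨hAt, hsA | ⟨hsB, hAB⟩⟩
    · exact .trans (.single (Or.inl hsA)) (.single (Or.inl hAt))
    · exact .trans (.single (Or.inl hsB)) (.trans (.single (Or.inr hAB)) (.single (Or.inl hAt)))

end Graphs

section Graphs2
variable {V : Type} {s A B t : V}

lemma reachG2 (h1 : s ≠ A) (h2 : s ≠ B) (h3 : s ≠ t) (h4 : A ≠ B) (h5 : A ≠ t) (h6 : B ≠ t)
    (S : Finset (V × V)) (hS : S ⊆ ({(A, B), (A, t), (s, A), (B, t)} : Finset (V × V))) :
    Relation.ReflTransGen (fun a b => (a, b) ∈ S ∨ (b, a) ∈ S) s t ↔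
      ((s, A) ∈ S ∧ ((A, t) ∈ S ∨ ((A, B) ∈ S ∧ (B, t) ∈ S))) := by
  have h1' : A ≠ s := h1.symm
  have h2' : B ≠ s := h2.symm
  have h3' : t ≠ s := h3.symm
  have h4' : B ≠ A := h4.symm
  have h5' : t ≠ A := h5.symm
  have h6' : t ≠ B := h6.symm
  constructor
  · intro hr
    by_cases hsA : (s, A) ∈ S
    · refine ⟨hsA, ?_⟩
      by_cases hAt : (A, t) ∈ S
      · exact Or.inl hAt
      · by_cases hAB : (A, B) ∈ S
        · by_cases hBt : (B, t) ∈ S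
          · exact Or.inr ⟨hAB, hBt⟩
          · refine absurd hr (noReach (fun v => v = s ∨ v = A ∨ v = B) (Or.inl rfl)
              (by simp [h3', h5', h6']) ?_)
            rintro a b (h | h) <;> have h' := hS h <;>
              simp only [Finset.mem_insert, Finset.mem_singleton, Prod.mk.injEq] at h' <;>
              rcases h' with ⟨rfl, rfl⟩ | ⟨rfl, rfl⟩ | ⟨rfl, rfl⟩ | ⟨rfl, rfl⟩ <;> simp_all
        · refine absurd hr (noReach (fun v => v = s ∨ v = A) (Or.inl rfl)
            (by simp [h3', h5']) ?_)
          rintro a b (h | h) <;> have h' := hS h <;>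
            simp only [Finset.mem_insert, Finset.mem_singleton, Prod.mk.injEq] at h' <;>
            rcases h' with ⟨rfl, rfl⟩ | ⟨rfl, rfl⟩ | ⟨rfl, rfl⟩ | ⟨rfl, rfl⟩ <;> simp_all
    · refine absurd hr (noReach (fun v => v = s) rfl h3' ?_)
      rintro a b (h | h) <;> have h' := hS h <;>
        simp only [Finset.mem_insert, Finset.mem_singleton, Prod.mk.injEq] at h' <;>
        rcases h' with ⟨rfl, rfl⟩ | ⟨rfl, rfl⟩ | ⟨rfl, rfl⟩ | ⟨rfl, rfl⟩ <;> simp_all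
  · rintro ⟨hsA, hAt | ⟨hAB, hBt⟩⟩
    · exact .trans (.single (Or.inl hsA)) (.single (Or.inl hAt))
    · exact .trans (.single (Or.inl hsA)) (.trans (.single (Or.inl hAB)) (.single (Or.inl hBt)))

lemma reachG3 (h1 : s ≠ A) (h2 : s ≠ B) (h3 : s ≠ t) (h4 : A ≠ B) (h5 : A ≠ t) (h6 : B ≠ t)
    (S : Finset (V × V)) (hS : S ⊆ ({(A, B), (A, t), (s, B), (B, t)} : Finset (V × V))) :
    Relation.ReflTransGen (fun a b => (a, b) ∈ S ∨ (b, a) ∈ S) s t ↔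
      ((s, B) ∈ S ∧ ((B, t) ∈ S ∨ ((A, B) ∈ S ∧ (A, t) ∈ S))) := by
  have h1' : A ≠ s := h1.symm
  have h2' : B ≠ s := h2.symm
  have h3' : t ≠ s := h3.symm
  have h4' : B ≠ A := h4.symm
  have h5' : t ≠ A := h5.symm
  have h6' : t ≠ B := h6.symm
  constructor
  · intro hr
    by_cases hsB : (s, B) ∈ S
    · refine ⟨hsB, ?_⟩
      by_cases hBt : (B, t) ∈ S
      · exact Or.inl hBt
      · by_cases hAB : (A, B) ∈ S
        · by_cases hAt : (A, t) ∈ S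
          · exact Or.inr ⟨hAB, hAt⟩
          · refine absurd hr (noReach (fun v => v = s ∨ v = A ∨ v = B) (Or.inl rfl)
              (by simp [h3', h5', h6']) ?_)
            rintro a b (h | h) <;> have h' := hS h <;>
              simp only [Finset.mem_insert, Finset.mem_singleton, Prod.mk.injEq] at h' <;>
              rcases h' with ⟨rfl, rfl⟩ | ⟨rfl, rfl⟩ | ⟨rfl, rfl⟩ | ⟨rfl, rfl⟩ <;> simp_all
        · refine absurd hr (noReach (fun v => v = s ∨ v = B) (Or.inl rfl)
            (by simp [h3', h6']) ?_)
          rintro a b (h | h) <;> have h' := hS h <;>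
            simp only [Finset.mem_insert, Finset.mem_singleton, Prod.mk.injEq] at h' <;>
            rcases h' with ⟨rfl, rfl⟩ | ⟨rfl, rfl⟩ | ⟨rfl, rfl⟩ | ⟨rfl, rfl⟩ <;> simp_all
    · refine absurd hr (noReach (fun v => v = s) rfl h3' ?_)
      rintro a b (h | h) <;> have h' := hS h <;>
        simp only [Finset.mem_insert, Finset.mem_singleton, Prod.mk.injEq] at h' <;>
        rcases h' with ⟨rfl, rfl⟩ | ⟨rfl, rfl⟩ | ⟨rfl, rfl⟩ | ⟨rfl, rfl⟩ <;> simp_all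
  · rintro ⟨hsB, hBt | ⟨hAB, hAt⟩⟩
    · exact .trans (.single (Or.inl hsB)) (.single (Or.inl hBt))
    · exact .trans (.single (Or.inl hsB)) (.trans (.single (Or.inr hAB)) (.single (Or.inl hAt)))

end Graphs2


section Eval
variable {V : Type} {s A B t : V}

lemma relG1 (h1 : s ≠ A) (h2 : s ≠ B) (h3 : s ≠ t) (h4 : A ≠ B) (h5 : A ≠ t) (h6 : B ≠ t)
    (p : V × V → ℝ) :
    ureliability ({(A, B), (A, t), (s, A), (s, B)} : Finset (V × V)) p s t
      = p (A, t) * p (s, A) + p (A, B) * p (A, t) * p (s, B)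
        - p (A, B) * p (A, t) * p (s, A) * p (s, B) := by
  have h1' : A ≠ s := h1.symm
  have h2' : B ≠ s := h2.symm
  have h3' : t ≠ s := h3.symm
  have h4' : B ≠ A := h4.symm
  have h5' : t ≠ A := h5.symm
  have h6' : t ≠ B := h6.symm
  have step1 : ureliability ({(A, B), (A, t), (s, A), (s, B)} : Finset (V × V)) p s t
      = ∑ S ∈ ({(A, B), (A, t), (s, A), (s, B)} : Finset (V × V)).powerset,
          if ((A, t) ∈ S ∧ ((s, A) ∈ S ∨ ((s, B) ∈ S ∧ (A, B) ∈ S))) then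
            ∏ e ∈ ({(A, B), (A, t), (s, A), (s, B)} : Finset (V × V)),
              (if e ∈ S then p e else 1 - p e)
          else 0 := by
    rw [ureliability]
    refine Finset.sum_congr rfl fun S hS => ?_
    rw [Finset.mem_powerset] at hS
    exact if_congr (reachG1 h1 h2 h3 h4 h5 h6 S hS) (prod_split _ _ hS p) rfl
  rw [step1]
  have hm1 : ((A, B) : V × V) ∉ ({(A, t), (s, A), (s, B)} : Finset (V × V)) := by
    simp [Prod.ext_iff, h6, h1', h4']
  have hm2 : ((A, t) : V × V) ∉ ({(s, A), (s, B)} : Finset (V × V)) := by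
    simp [Prod.ext_iff, h1']
  have hm3 : ((s, A) : V × V) ∉ ({(s, B)} : Finset (V × V)) := by
    simp [Prod.ext_iff, h4]
  rw [Finset.sum_powerset_insert hm1]
  simp only [Finset.sum_powerset_insert hm2, Finset.sum_powerset_insert hm3]
  have hps : ({((s, B) : V × V)} : Finset (V × V)).powerset
      = {∅, {((s, B) : V × V)}} := by
    rw [show ({((s, B) : V × V)} : Finset (V × V)) = insert ((s, B) : V × V) ∅ by simp,
      Finset.powerset_insert, Finset.powerset_empty]
    ext x; simp [or_comm]
  have hem : (∅ : Finset (V × V)) ∉ ({{((s, B) : V × V)}} : Finset (Finset (V × V))) := by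
    simp [Ne.symm (Finset.singleton_ne_empty _)]
  simp only [hps, Finset.sum_insert hem, Finset.sum_singleton]
  simp only [Finset.prod_insert hm1, Finset.prod_insert hm2, Finset.prod_insert hm3,
    Finset.prod_singleton]
  simp only [Finset.mem_insert, Finset.mem_singleton, Finset.notMem_empty, Prod.mk.injEq,
    h1, h2, h3, h4, h5, h6, h1', h2', h3', h4', h5', h6', ne_eq, not_false_eq_true,
    false_and, and_false, true_and, and_true, or_false, false_or, and_self, or_self,
    if_true, if_false, eq_self_iff_true, ite_true, ite_false, and_true, true_or, or_true]
  norm_num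
  ring
lemma relG2 (h1 : s ≠ A) (h2 : s ≠ B) (h3 : s ≠ t) (h4 : A ≠ B) (h5 : A ≠ t) (h6 : B ≠ t)
    (p : V × V → ℝ) :
    ureliability ({(A, B), (A, t), (s, A), (B, t)} : Finset (V × V)) p s t
      = p (s, A) * p (A, t) + p (A, B) * p (s, A) * p (B, t)
        - p (A, B) * p (A, t) * p (s, A) * p (B, t) := by
  have h1' : A ≠ s := h1.symm
  have h2' : B ≠ s := h2.symm
  have h3' : t ≠ s := h3.symm
  have h4' : B ≠ A := h4.symm
  have h5' : t ≠ A := h5.symm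
  have h6' : t ≠ B := h6.symm
  have step1 : ureliability ({(A, B), (A, t), (s, A), (B, t)} : Finset (V × V)) p s t
      = ∑ S ∈ ({(A, B), (A, t), (s, A), (B, t)} : Finset (V × V)).powerset,
          if ((s, A) ∈ S ∧ ((A, t) ∈ S ∨ ((A, B) ∈ S ∧ (B, t) ∈ S))) then
            ∏ e ∈ ({(A, B), (A, t), (s, A), (B, t)} : Finset (V × V)),
              (if e ∈ S then p e else 1 - p e)
          else 0 := by
    rw [ureliability]
    refine Finset.sum_congr rfl fun S hS => ?_
    rw [Finset.mem_powerset] at hS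
    exact if_congr (reachG2 h1 h2 h3 h4 h5 h6 S hS) (prod_split _ _ hS p) rfl
  rw [step1]
  have hm1 : ((A, B) : V × V) ∉ ({(A, t), (s, A), (B, t)} : Finset (V × V)) := by
    simp [Prod.ext_iff, h1, h2, h3, h4, h5, h6, h1', h2', h3', h4', h5', h6']
  have hm2 : ((A, t) : V × V) ∉ ({(s, A), (B, t)} : Finset (V × V)) := by
    simp [Prod.ext_iff, h1, h2, h3, h4, h5, h6, h1', h2', h3', h4', h5', h6']
  have hm3 : ((s, A) : V × V) ∉ ({(B, t)} : Finset (V × V)) := by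
    simp [Prod.ext_iff, h1, h2, h3, h4, h5, h6, h1', h2', h3', h4', h5', h6']
  rw [Finset.sum_powerset_insert hm1]
  simp only [Finset.sum_powerset_insert hm2, Finset.sum_powerset_insert hm3]
  have hps : ({(B, t)} : Finset (V × V)).powerset
      = {∅, {(B, t)}} := by
    rw [show ({(B, t)} : Finset (V × V)) = insert ((B, t) : V × V) ∅ by simp,
      Finset.powerset_insert, Finset.powerset_empty]
    ext x; simp [or_comm]
  have hem : (∅ : Finset (V × V)) ∉ ({{(B, t)}} : Finset (Finset (V × V))) := by
    simp [Ne.symm (Finset.singleton_ne_empty _)]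
  simp only [hps, Finset.sum_insert hem, Finset.sum_singleton]
  simp only [Finset.prod_insert hm1, Finset.prod_insert hm2, Finset.prod_insert hm3,
    Finset.prod_singleton]
  simp only [Finset.mem_insert, Finset.mem_singleton, Finset.notMem_empty, Prod.mk.injEq,
    h1, h2, h3, h4, h5, h6, h1', h2', h3', h4', h5', h6', ne_eq, not_false_eq_true,
    false_and, and_false, true_and, and_true, or_false, false_or, and_self, or_self,
    if_true, if_false, eq_self_iff_true, ite_true, ite_false, and_true, true_or, or_true]
  norm_num
  ring

lemma relG3 (h1 : s ≠ A) (h2 : s ≠ B) (h3 : s ≠ t) (h4 : A ≠ B) (h5 : A ≠ t) (h6 : B ≠ t)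
    (p : V × V → ℝ) :
    ureliability ({(A, B), (A, t), (s, B), (B, t)} : Finset (V × V)) p s t
      = p (s, B) * p (B, t) + p (A, B) * p (A, t) * p (s, B)
        - p (A, B) * p (A, t) * p (s, B) * p (B, t) := by
  have h1' : A ≠ s := h1.symm
  have h2' : B ≠ s := h2.symm
  have h3' : t ≠ s := h3.symm
  have h4' : B ≠ A := h4.symm
  have h5' : t ≠ A := h5.symm
  have h6' : t ≠ B := h6.symm
  have step1 : ureliability ({(A, B), (A, t), (s, B), (B, t)} : Finset (V × V)) p s t
      = ∑ S ∈ ({(A, B), (A, t), (s, B), (B, t)} : Finset (V × V)).powerset,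
          if ((s, B) ∈ S ∧ ((B, t) ∈ S ∨ ((A, B) ∈ S ∧ (A, t) ∈ S))) then
            ∏ e ∈ ({(A, B), (A, t), (s, B), (B, t)} : Finset (V × V)),
              (if e ∈ S then p e else 1 - p e)
          else 0 := by
    rw [ureliability]
    refine Finset.sum_congr rfl fun S hS => ?_
    rw [Finset.mem_powerset] at hS
    exact if_congr (reachG3 h1 h2 h3 h4 h5 h6 S hS) (prod_split _ _ hS p) rfl
  rw [step1]
  have hm1 : ((A, B) : V × V) ∉ ({(A, t), (s, B), (B, t)} : Finset (V × V)) := by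
    simp [Prod.ext_iff, h1, h2, h3, h4, h5, h6, h1', h2', h3', h4', h5', h6']
  have hm2 : ((A, t) : V × V) ∉ ({(s, B), (B, t)} : Finset (V × V)) := by
    simp [Prod.ext_iff, h1, h2, h3, h4, h5, h6, h1', h2', h3', h4', h5', h6']
  have hm3 : ((s, B) : V × V) ∉ ({(B, t)} : Finset (V × V)) := by
    simp [Prod.ext_iff, h1, h2, h3, h4, h5, h6, h1', h2', h3', h4', h5', h6']
  rw [Finset.sum_powerset_insert hm1]
  simp only [Finset.sum_powerset_insert hm2, Finset.sum_powerset_insert hm3]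
  have hps : ({(B, t)} : Finset (V × V)).powerset
      = {∅, {(B, t)}} := by
    rw [show ({(B, t)} : Finset (V × V)) = insert ((B, t) : V × V) ∅ by simp,
      Finset.powerset_insert, Finset.powerset_empty]
    ext x; simp [or_comm]
  have hem : (∅ : Finset (V × V)) ∉ ({{(B, t)}} : Finset (Finset (V × V))) := by
    simp [Ne.symm (Finset.singleton_ne_empty _)]
  simp only [hps, Finset.sum_insert hem, Finset.sum_singleton]
  simp only [Finset.prod_insert hm1, Finset.prod_insert hm2, Finset.prod_insert hm3,
    Finset.prod_singleton]
  simp only [Finset.mem_insert, Finset.mem_singleton, Finset.notMem_empty, Prod.mk.injEq,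
    h1, h2, h3, h4, h5, h6, h1', h2', h3', h4', h5', h6', ne_eq, not_false_eq_true,
    false_and, and_false, true_and, and_true, or_false, false_or, and_self, or_self,
    if_true, if_false, eq_self_iff_true, ite_true, ite_false, and_true, true_or, or_true]
  norm_num
  ring

end Eval

lemma pair_cases {α : Type*} [DecidableEq α] (a b c : α) (A' : Finset α) (hsub : A' ⊆ {a, b, c})
    (hcard : A'.card = 2) : A' = {a, b} ∨ A' = {a, c} ∨ A' = {b, c} := by
  classical
  obtain ⟨x, y, hxy, rfl⟩ := Finset.card_eq_two.mp hcard
  have hx : x ∈ ({a, b, c} : Finset α) := hsub (by simp)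
  have hy : y ∈ ({a, b, c} : Finset α) := hsub (by simp)
  simp only [Finset.mem_insert, Finset.mem_singleton] at hx hy
  rcases hx with rfl | rfl | rfl <;> rcases hy with rfl | rfl | rfl <;>
    first
      | exact absurd rfl hxy
      | exact Or.inl rfl
      | exact Or.inr (Or.inl rfl)
      | exact Or.inr (Or.inr rfl)
      | exact Or.inl (Finset.pair_comm _ _)
      | exact Or.inr (Or.inl (Finset.pair_comm _ _))
      | exact Or.inr (Or.inr (Finset.pair_comm _ _))


/-- The optimal solution of budgeted reliability maximization may vary with the
probability threshold `ζ` on new edges.  In the example graph with vertices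
`s, A, B, t` (pairwise distinct), existing edges `AB`, `At` with probability
`α = 1/2`, candidate set `C = {sA, sB, Bt}` and budget `k = 2`: when the added
edges receive probability `ζ = 7/10` (function `p₁`), the unique optimal
size-2 subset of `C` is `{sB, Bt}`, but when they receive probability
`ζ = 3/10` (function `p₂`), the unique optimal size-2 subset is `{sA, sB}`. -/
theorem stmt7 {V : Type} (s A B t : V)
    (h1 : s ≠ A) (h2 : s ≠ B) (h3 : s ≠ t) (h4 : A ≠ B) (h5 : A ≠ t) (h6 : B ≠ t)
    (p₁ p₂ : V × V → ℝ)
    (h₁AB : p₁ (A, B) = 1 / 2) (h₁At : p₁ (A, t) = 1 / 2)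
    (h₁sA : p₁ (s, A) = 7 / 10) (h₁sB : p₁ (s, B) = 7 / 10) (h₁Bt : p₁ (B, t) = 7 / 10)
    (h₂AB : p₂ (A, B) = 1 / 2) (h₂At : p₂ (A, t) = 1 / 2)
    (h₂sA : p₂ (s, A) = 3 / 10) (h₂sB : p₂ (s, B) = 3 / 10) (h₂Bt : p₂ (B, t) = 3 / 10) :
    (∀ A' ⊆ ({(s, A), (s, B), (B, t)} : Finset (V × V)), A'.card = 2 →
      A' ≠ ({(s, B), (B, t)} : Finset (V × V)) →
        ureliability (({(A, B), (A, t)} : Finset (V × V)) ∪ A') p₁ s t <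
          ureliability (({(A, B), (A, t)} : Finset (V × V)) ∪ {(s, B), (B, t)}) p₁ s t) ∧
    (∀ A' ⊆ ({(s, A), (s, B), (B, t)} : Finset (V × V)), A'.card = 2 →
      A' ≠ ({(s, A), (s, B)} : Finset (V × V)) →
        ureliability (({(A, B), (A, t)} : Finset (V × V)) ∪ A') p₂ s t <
          ureliability (({(A, B), (A, t)} : Finset (V × V)) ∪ {(s, A), (s, B)}) p₂ s t) := by
  have hu : ∀ x y : V × V, ({(A, B), (A, t)} : Finset (V × V)) ∪ {x, y}
      = {(A, B), (A, t), x, y} := by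
    intro x y; ext e; simp only [Finset.mem_union, Finset.mem_insert, Finset.mem_singleton]; tauto
  constructor
  · intro A' hsub hcard hne
    rcases pair_cases _ _ _ A' hsub hcard with rfl | rfl | rfl
    · rw [hu, hu, relG1 h1 h2 h3 h4 h5 h6, relG3 h1 h2 h3 h4 h5 h6,
        h₁AB, h₁At, h₁sA, h₁sB, h₁Bt]
      norm_num
    · rw [hu, hu, relG2 h1 h2 h3 h4 h5 h6, relG3 h1 h2 h3 h4 h5 h6,
        h₁AB, h₁At, h₁sA, h₁sB, h₁Bt]
      norm_num
    · exact absurd rfl hne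
  · intro A' hsub hcard hne
    rcases pair_cases _ _ _ A' hsub hcard with rfl | rfl | rfl
    · exact absurd rfl hne
    · rw [hu, hu, relG2 h1 h2 h3 h4 h5 h6, relG1 h1 h2 h3 h4 h5 h6,
        h₂AB, h₂At, h₂sA, h₂sB, h₂Bt]
      norm_num
    · rw [hu, hu, relG3 h1 h2 h3 h4 h5 h6, relG1 h1 h2 h3 h4 h5 h6,
        h₂AB, h₂At, h₂sA, h₂sB, h₂Bt]
      norm_num
end

section
/- Replacing any new edge by the direct edge (s,t) never decreases the s-t reliability: let (V,E,p) be an uncertain directed graph, s, t ∈ V, ζ ∈ [0,1], let E₁ ⊆ (V×V)∖E be a finite set of new edges with (s,t) ∉ E ∪ E₁, and let e ∈ E₁. Extend p by assigning probability ζ to every edge of E₁ ∪ {(s,t)}. Then R(s,t,(V, E ∪ (E₁∖{e}) ∪ {(s,t)}, p)) ≥ R(s,t,(V, E ∪ E₁, p)). -/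
open scoped Classical

/-- Replacing any new edge by the direct edge `(s,t)` never decreases the s-t
reliability: if `E₁` is a set of new edges disjoint from `E`, `(s,t) ∉ E ∪ E₁`,
`q` agrees with `p` on `E` and assigns probability `ζ ∈ [0,1]` to every edge of
`E₁ ∪ {(s,t)}`, then for any `e ∈ E₁`,
`R(s,t,(V, E ∪ (E₁ \ {e}) ∪ {(s,t)}, q)) ≥ R(s,t,(V, E ∪ E₁, q))`. -/
theorem stmt10 {V : Type} [Fintype V] (E : Finset (V × V)) (p : V × V → ℝ)
    (s t : V) (hp : ∀ f ∈ E, 0 ≤ p f ∧ p f ≤ 1)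
    (ζ : ℝ) (hζ0 : 0 ≤ ζ) (hζ1 : ζ ≤ 1)
    (E₁ : Finset (V × V)) (hE₁ : ∀ f ∈ E₁, f ∉ E)
    (hst : (s, t) ∉ E ∪ E₁)
    (e : V × V) (he : e ∈ E₁)
    (q : V × V → ℝ)
    (hqE : ∀ f ∈ E, q f = p f)
    (hqNew : ∀ f ∈ insert (s, t) E₁, q f = ζ) :
    reliability (E ∪ E₁.erase e ∪ {(s, t)}) q s t ≥ reliability (E ∪ E₁) q s t := by
  classical
  set A : Finset (V × V) := E ∪ E₁ with hA
  set B : Finset (V × V) := E ∪ E₁.erase e ∪ {(s, t)} with hB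
  have heE : e ∉ E := hE₁ e he
  have heA : e ∈ A := Finset.mem_union_right _ he
  have hstA : (s, t) ∉ A := hst
  have hqst : q (s, t) = ζ := hqNew _ (Finset.mem_insert_self _ _)
  have hqe : q e = ζ := hqNew e (Finset.mem_insert_of_mem he)
  have hB' : B = insert (s, t) (A.erase e) := by
    ext f
    by_cases hf : f = (s, t)
    · subst hf
      simp [hB, hA]
    · simp only [hB, hA, Finset.mem_union, Finset.mem_insert, Finset.mem_erase,
        Finset.mem_singleton, hf, false_or, or_false]
      constructor
      · rintro (hfE | ⟨hfe, hf1⟩)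
        · exact ⟨fun h => heE (h ▸ hfE), Or.inl hfE⟩
        · exact ⟨hfe, Or.inr hf1⟩
      · rintro ⟨hfe, hfE | hf1⟩
        · exact Or.inl hfE
        · exact Or.inr ⟨hfe, hf1⟩
  -- bounds on q on B
  have hq01 : ∀ f ∈ B, 0 ≤ q f ∧ q f ≤ 1 := by
    intro f hf
    rw [hB'] at hf
    rcases Finset.mem_insert.1 hf with hf | hf
    · rw [hf, hqst]; exact ⟨hζ0, hζ1⟩
    · rcases Finset.mem_union.1 (Finset.mem_of_mem_erase hf) with hf | hf
      · rw [hqE f hf]; exact hp f hf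
      · rw [hqNew f (Finset.mem_insert_of_mem hf)]; exact ⟨hζ0, hζ1⟩
  set φ : Finset (V × V) → Finset (V × V) :=
    fun S => if e ∈ S then insert (s, t) (S.erase e) else S with hφ
  -- terms
  set g : Finset (V × V) → ℝ := fun T =>
    if Relation.ReflTransGen (fun a b => (a, b) ∈ T) s t then
      (∏ f ∈ T, q f) * ∏ f ∈ B \ T, (1 - q f)
    else 0 with hg
  have hgnonneg : ∀ T ∈ B.powerset, 0 ≤ g T := by
    intro T hT
    rw [Finset.mem_powerset] at hT
    simp only [hg]
    split
    · apply mul_nonneg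
      · exact Finset.prod_nonneg fun f hf => (hq01 f (hT hf)).1
      · exact Finset.prod_nonneg fun f hf => by
          have := (hq01 f (Finset.mem_sdiff.1 hf).1).2; linarith
    · exact le_rfl
  have hφmem : ∀ S ∈ A.powerset, φ S ∈ B.powerset := by
    intro S hS
    rw [Finset.mem_powerset] at hS ⊢
    by_cases heS : e ∈ S
    · simp only [hφ, if_pos heS]
      rw [hB']
      exact Finset.insert_subset_insert _ (Finset.erase_subset_erase _ hS)
    · simp only [hφ, if_neg heS]
      intro f hf
      have hfA : f ∈ A := hS hf
      rw [hB']
      refine Finset.mem_insert_of_mem (Finset.mem_erase.2 ⟨?_, hfA⟩)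
      rintro rfl
      exact heS hf
  have hstS : ∀ S : Finset (V × V), S ⊆ A → (s, t) ∉ S := fun S hS h => hstA (hS h)
  have hinj : Set.InjOn φ A.powerset := by
    intro S₁ h₁ S₂ h₂ hEq
    have h₁' : S₁ ⊆ A := Finset.mem_powerset.1 (Finset.mem_coe.1 h₁)
    have h₂' : S₂ ⊆ A := Finset.mem_powerset.1 (Finset.mem_coe.1 h₂)
    simp only [hφ] at hEq
    by_cases he1 : e ∈ S₁ <;> by_cases he2 : e ∈ S₂ <;>
      simp only [he1, he2, if_true, if_false] at hEq
    · ext f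
      by_cases hf1 : f = (s, t)
      · subst hf1
        simp [hstS S₁ h₁', hstS S₂ h₂']
      · by_cases hf2 : f = e
        · subst hf2
          simp [he1, he2]
        · have hiff : f ∈ insert (s, t) (S₁.erase e) ↔
              f ∈ insert (s, t) (S₂.erase e) := by rw [hEq]
          simpa [hf1, hf2] using hiff
    · exact absurd (hEq ▸ Finset.mem_insert_self (s, t) _) (hstS S₂ h₂')
    · exact absurd (hEq.symm ▸ Finset.mem_insert_self (s, t) _) (hstS S₁ h₁')
    · exact hEq
  -- term comparison
  have hterm : ∀ S ∈ A.powerset,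
      (if Relation.ReflTransGen (fun a b => (a, b) ∈ S) s t then
        (∏ f ∈ S, q f) * ∏ f ∈ A \ S, (1 - q f) else 0) ≤ g (φ S) := by
    intro S hS
    rw [Finset.mem_powerset] at hS
    have hstnS : (s, t) ∉ S := hstS S hS
    by_cases hreach : Relation.ReflTransGen (fun a b => (a, b) ∈ S) s t
    · rw [if_pos hreach]
      by_cases heS : e ∈ S
      · have hφS : φ S = insert (s, t) (S.erase e) := by simp [hφ, heS]
        have hstne : (s, t) ∉ S.erase e := fun h => hstnS (Finset.mem_of_mem_erase h)
        have hprod1 : ∏ f ∈ φ S, q f = ∏ f ∈ S, q f := by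
          rw [hφS, Finset.prod_insert hstne, hqst, ← Finset.mul_prod_erase S q heS, hqe]
        have hsdiff : B \ φ S = A \ S := by
          rw [hφS, hB']
          ext f
          by_cases hf1 : f = (s, t)
          · subst hf1
            simp [hstA]
          · by_cases hf2 : f = e
            · subst hf2
              simp [heS]
            · simp only [Finset.mem_sdiff, Finset.mem_insert, Finset.mem_erase,
                hf1, hf2, false_or]
              tauto
        have hreach' : Relation.ReflTransGen (fun a b => (a, b) ∈ φ S) s t := by
          refine Relation.ReflTransGen.single ?_
          rw [hφS]; exact Finset.mem_insert_self _ _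
        simp only [hg, if_pos hreach', hprod1, hsdiff, le_refl]
      · have hφS : φ S = S := by simp [hφ, heS]
        have hsdiff : B \ S = insert (s, t) ((A \ S).erase e) := by
          rw [hB']
          ext f
          by_cases hf1 : f = (s, t)
          · subst hf1
            simp [hstnS]
          · by_cases hf2 : f = e
            · subst hf2
              simp [heS]
            · simp only [Finset.mem_sdiff, Finset.mem_insert, Finset.mem_erase,
                hf1, hf2, false_or]
              tauto
        have hstne : (s, t) ∉ (A \ S).erase e := fun h =>
          hstA (Finset.mem_sdiff.1 (Finset.mem_of_mem_erase h)).1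
        have heAS : e ∈ A \ S := Finset.mem_sdiff.2 ⟨heA, heS⟩
        have hprod2 : ∏ f ∈ B \ φ S, (1 - q f) = ∏ f ∈ A \ S, (1 - q f) := by
          rw [hφS, hsdiff, Finset.prod_insert hstne, hqst,
            ← Finset.mul_prod_erase (A \ S) (fun f => 1 - q f) heAS, hqe]
        rw [hφS] at hprod2 ⊢
        simp only [hg]
        rw [if_pos hreach, hprod2]
    · rw [if_neg hreach]
      exact hgnonneg (φ S) (hφmem S (Finset.mem_powerset.2 hS))
  have himg : A.powerset.image φ ⊆ B.powerset := by
    intro T hT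
    rcases Finset.mem_image.1 hT with ⟨S, hS, rfl⟩
    exact hφmem S hS
  rw [ge_iff_le]
  show reliability A q s t ≤ reliability B q s t
  unfold reliability
  calc ∑ S ∈ A.powerset,
        (if Relation.ReflTransGen (fun a b => (a, b) ∈ S) s t then
          (∏ f ∈ S, q f) * ∏ f ∈ A \ S, (1 - q f) else 0)
      ≤ ∑ S ∈ A.powerset, g (φ S) := Finset.sum_le_sum hterm
    _ = ∑ T ∈ A.powerset.image φ, g T :=
        (Finset.sum_image (fun x hx y hy h =>
          hinj (Finset.mem_coe.2 hx) (Finset.mem_coe.2 hy) h)).symm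
    _ ≤ ∑ T ∈ B.powerset, g T :=
        Finset.sum_le_sum_of_subset_of_nonneg himg (fun T hT _ => hgnonneg T hT)
end

section
/- If the direct edge (s,t) is missing from the input graph and is allowed to be added, then it belongs to an optimal top-k solution: let (V,E,p) be a finite uncertain directed graph with V finite, s, t ∈ V, (s,t) ∉ E, ζ ∈ [0,1], and let k ≥ 1 be an integer with at least k edges missing from E. Then there exists a set E* ⊆ (V×V)∖E with |E*| = k and (s,t) ∈ E* such that, when every added edge receives probability ζ and edges of E keep probability p, R(s,t,(V, E ∪ E*, p)) ≥ R(s,t,(V, E ∪ E₁, p)) for every set E₁ ⊆ (V×V)∖E with |E₁| = k. -/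
open scoped Classical

/-- Reliability of `(V, A, p)` when the edges of `F` are present in every possible world. -/
noncomputable def reliabilityGiven {V : Type} (F A : Finset (V × V)) (p : V × V → ℝ)
    (s t : V) : ℝ :=
  ∑ S ∈ A.powerset,
    if Relation.ReflTransGen (fun a b => (a, b) ∈ S ∪ F) s t then
      (∏ e ∈ S, p e) * ∏ e ∈ A \ S, (1 - p e)
    else 0

section Reliability

variable {V : Type} (F A : Finset (V × V)) (p : V × V → ℝ) (s t : V)

theorem sum_powerset_prod_mul_prod_one_sub :
    ∑ S ∈ A.powerset, (∏ e ∈ S, p e) * ∏ e ∈ A \ S, (1 - p e) = 1 := by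
  rw [← Finset.prod_add]
  simp

theorem reliability_eq_reliabilityGiven_empty :
    reliability A p s t = reliabilityGiven ∅ A p s t := by
  simp [reliability, reliabilityGiven]

theorem reliabilityGiven_le_one (hp : ∀ e ∈ A, 0 ≤ p e ∧ p e ≤ 1) :
    reliabilityGiven F A p s t ≤ 1 := by
  rw [← sum_powerset_prod_mul_prod_one_sub A p]
  refine Finset.sum_le_sum fun S hS => ?_
  rw [Finset.mem_powerset] at hS
  have hworld : 0 ≤ (∏ e ∈ S, p e) * ∏ e ∈ A \ S, (1 - p e) :=
    mul_nonneg (Finset.prod_nonneg fun e he => (hp e (hS he)).1)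
      (Finset.prod_nonneg fun e he => sub_nonneg.mpr (hp e (Finset.mem_sdiff.mp he).1).2)
  split_ifs
  exacts [le_rfl, hworld]

theorem reliabilityGiven_eq_one_of_mem (hst : (s, t) ∈ F) :
    reliabilityGiven F A p s t = 1 := by
  have hreach : ∀ S : Finset (V × V),
      Relation.ReflTransGen (fun a b => (a, b) ∈ S ∪ F) s t :=
    fun S => .single (Finset.mem_union_right S hst)
  simp only [reliabilityGiven, if_pos (hreach _)]
  exact sum_powerset_prod_mul_prod_one_sub A p

/-- Pivotal decomposition: condition on whether the edge `e` is present. -/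
theorem reliabilityGiven_insert {e : V × V} (he : e ∉ A) :
    reliabilityGiven F (insert e A) p s t =
      p e * reliabilityGiven (insert e F) A p s t + (1 - p e) * reliabilityGiven F A p s t := by
  rw [reliabilityGiven, Finset.sum_powerset_insert he, add_comm, reliabilityGiven,
    reliabilityGiven, Finset.mul_sum, Finset.mul_sum]
  congr 1 <;> refine Finset.sum_congr rfl fun S hS => ?_
  all_goals
    have heS : e ∉ S := fun h => he (Finset.mem_powerset.mp hS h)
  · rw [Finset.insert_sdiff_insert, Finset.sdiff_insert_of_notMem he,
      Finset.insert_union, ← Finset.union_insert, Finset.prod_insert heS]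
    split_ifs <;> ring
  · rw [Finset.insert_sdiff_of_notMem _ heS,
      Finset.prod_insert fun h => he (Finset.mem_sdiff.mp h).1]
    split_ifs <;> ring

/-- Pivoting on the new edge, the difference of the two sides is
`(p (s, t) - p e) * (1 - R) + p e * (1 - R_e)`, where `R_e ≤ 1` is the reliability with `e`
certain and `R` the one without it. -/
theorem reliability_insert_le_reliability_insert_of_le (B : Finset (V × V)) {e : V × V}
    (hp : ∀ f ∈ B, 0 ≤ p f ∧ p f ≤ 1) (he : e ∉ B) (hst : (s, t) ∉ B)
    (hpe : 0 ≤ p e) (hle : p e ≤ p (s, t)) :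
    reliability (insert e B) p s t ≤ reliability (insert (s, t) B) p s t := by
  rw [reliability_eq_reliabilityGiven_empty, reliability_eq_reliabilityGiven_empty,
    reliabilityGiven_insert _ _ _ _ _ he, reliabilityGiven_insert _ _ _ _ _ hst,
    reliabilityGiven_eq_one_of_mem _ _ _ _ _ (Finset.mem_insert_self _ _)]
  have hR := reliabilityGiven_le_one ∅ B p s t hp
  have hRe := reliabilityGiven_le_one (insert e ∅) B p s t hp
  nlinarith

end Reliability

/-- If the direct edge `(s,t)` is missing from the input graph and is allowed
to be added, then it belongs to an optimal top-`k` solution: for any budget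
`k ≥ 1` not exceeding the number of missing edges, there is a set `E*` of `k`
missing edges containing `(s,t)` whose addition (each new edge with probability
`ζ`, edges of `E` keeping probability `p`) yields s-t reliability at least that
of adding any other set of `k` missing edges. -/
theorem stmt11 {V : Type} [Fintype V] (E : Finset (V × V)) (p : V × V → ℝ)
    (s t : V) (hp : ∀ f ∈ E, 0 ≤ p f ∧ p f ≤ 1)
    (ζ : ℝ) (hζ0 : 0 ≤ ζ) (hζ1 : ζ ≤ 1)
    (hst : (s, t) ∉ E)
    (k : ℕ) (hk : 1 ≤ k)
    (hmiss : k ≤ ((Finset.univ : Finset (V × V)) \ E).card) :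
    ∃ Estar : Finset (V × V), (∀ f ∈ Estar, f ∉ E) ∧ Estar.card = k ∧
      (s, t) ∈ Estar ∧
      ∀ E₁ : Finset (V × V), (∀ f ∈ E₁, f ∉ E) → E₁.card = k →
        reliability (E ∪ E₁) (fun f => if f ∈ E then p f else ζ) s t ≤
          reliability (E ∪ Estar) (fun f => if f ∈ E then p f else ζ) s t := by
  set q : V × V → ℝ := fun f => if f ∈ E then p f else ζ
  have hq : ∀ f, 0 ≤ q f ∧ q f ≤ 1 := fun f => by
    by_cases hf : f ∈ E <;> simp [q, hf, hp, hζ0, hζ1]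
  have hcand : ∀ A, A ∈ (Finset.univ \ E).powersetCard k ↔ (∀ f ∈ A, f ∉ E) ∧ A.card = k := by
    simp [Finset.mem_powersetCard, Finset.subset_iff]
  obtain ⟨E₀, hE₀, hmax⟩ := ((Finset.univ \ E).powersetCard k).exists_max_image
    (fun A => reliability (E ∪ A) q s t) (Finset.powersetCard_nonempty.mpr hmiss)
  obtain ⟨hE₀E, hE₀k⟩ := (hcand E₀).mp hE₀
  have hopt : ∀ E₁ : Finset (V × V), (∀ f ∈ E₁, f ∉ E) → E₁.card = k →
      reliability (E ∪ E₁) q s t ≤ reliability (E ∪ E₀) q s t :=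
    fun E₁ h₁ hk₁ => hmax E₁ ((hcand E₁).mpr ⟨h₁, hk₁⟩)
  by_cases hstE₀ : (s, t) ∈ E₀
  · exact ⟨E₀, hE₀E, hE₀k, hstE₀, hopt⟩
  -- otherwise trade any edge `f` of the optimum `E₀` for `(s, t)`
  obtain ⟨f, hf⟩ : E₀.Nonempty := Finset.card_pos.mp (by omega)
  have hstB : (s, t) ∉ E ∪ E₀.erase f := by simp [hst, hstE₀]
  have hfB : f ∉ E ∪ E₀.erase f := by simp [hE₀E f hf]
  refine ⟨insert (s, t) (E₀.erase f), ?_, ?_, Finset.mem_insert_self _ _,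
    fun E₁ h₁ hk₁ => (hopt E₁ h₁ hk₁).trans ?_⟩
  · simpa [hst] using fun a b _ h => hE₀E (a, b) h
  · rw [Finset.card_insert_of_notMem (by simp [hstE₀]), Finset.card_erase_of_mem hf]
    omega
  · rw [← Finset.insert_erase hf, Finset.union_insert, Finset.erase_insert (by simp),
      Finset.union_insert]
    exact reliability_insert_le_reliability_insert_of_le q s t _ (fun g _ => hq g) hfB hstB
      (hq f).1 (by simp [q, hst, hE₀E f hf])
end
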